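/- arXiv:1606.02928 — 2 statements merged into one kernel-verified Lean document; each statement's English description precedes it below -/
import Mathlib

section
/- For the staircase Ferrers board St_n = B(0,1,…,n−1) and every integer z, ∏_{j=1}^{n} [z + 2(j−1)]_{a q^{−4(j−1)}; q} = Σ_{k=0}^{n} r_k^{(2)}(a,q;St_n) · ∏_{i=1}^{n−k} [z + i − 1]_{a q^{−2(i−1)}; q}. -/
open scoped BigOperators Classical

noncomputable section
namespace EllRook

/-- Modified Jacobi theta function `θ(x;p)`. -/
def theta (x p : ℂ) : ℂ := ∏' j : ℕ, ((1 - p ^ j * x) * (1 - p ^ (j + 1) / x))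

/-- Elliptic small weight `w_{a,b;q,p}(k)`. -/
def ew (a b q p : ℂ) (k : ℤ) : ℂ :=
  q * (theta (a * q ^ (2 * k + 1)) p * theta (b * q ^ k) p * theta (a * q ^ (k - 2) / b) p) /
    (theta (a * q ^ (2 * k - 1)) p * theta (b * q ^ (k + 2)) p * theta (a * q ^ k / b) p)

/-- Elliptic big weight `W_{a,b;q,p}(k)`. -/
def eW (a b q p : ℂ) (k : ℤ) : ℂ :=
  q ^ k *
      (theta (a * q ^ (1 + 2 * k)) p * theta (b * q) p * theta (b * q ^ (2 : ℤ)) p *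
        theta (a * q ^ (-1 : ℤ) / b) p * theta (a / b) p) /
    (theta (a * q) p * theta (b * q ^ (k + 1)) p * theta (b * q ^ (k + 2)) p *
      theta (a * q ^ (k - 1) / b) p * theta (a * q ^ k / b) p)

/-- Elliptic number `[m]_{a,b;q,p}`. -/
def en (a b q p : ℂ) (m : ℤ) : ℂ :=
  (theta (q ^ m) p * theta (a * q ^ m) p * theta (b * q ^ (2 : ℤ)) p * theta (a / b) p) /
    (theta q p * theta (a * q) p * theta (b * q ^ (m + 1)) p * theta (a * q ^ (m - 1) / b) p)

/-- The q-number `[m]_q` for an integer `m`. -/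
def qInt (q : ℂ) (m : ℤ) : ℂ := (1 - q ^ m) / (1 - q)

/-- The Q-shifted factorial `(x;Q)_m`. -/
def qPoch (x Q : ℂ) (m : ℕ) : ℂ := ∏ i ∈ Finset.range m, (1 - x * Q ^ i)

/-- The q-binomial coefficient. -/
def qBinom (q : ℂ) (n k : ℕ) : ℂ :=
  ∏ i ∈ Finset.Icc 1 k, (1 - q ^ ((n : ℤ) - (k : ℤ) + (i : ℤ))) / (1 - q ^ (i : ℤ))

/-- The a;q-number `[m]_{x;q}`. -/
def aqNum (x q : ℂ) (m : ℤ) : ℂ :=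
  q ^ (1 - m) * (1 - q ^ m) * (1 - x * q ^ m) / ((1 - q) * (1 - x * q))

/-- The a;q big weight `W_{x;q}(k)`. -/
def aqW (x q : ℂ) (k : ℤ) : ℂ := q ^ (-k) * (1 - x * q ^ (1 + 2 * k)) / (1 - x * q)

/-- The a;q small weight `w_{a;q}(k)`. -/
def waq (a q : ℂ) (k : ℤ) : ℂ := q⁻¹ * (1 - a * q ^ (2 * k + 1)) / (1 - a * q ^ (2 * k - 1))

/-! Ferrers boards and file placements (alpha-parameter model).
Cells are written `(i, j)` for column `i` (from the left) and row `j` (from the bottom),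
both `1`-indexed. -/

/-- The board `B(h 1, …, h n)`: cells `(i,j)` with `1 ≤ i ≤ n`, `1 ≤ j ≤ h i`. -/
def ferrers (n : ℕ) (h : ℕ → ℕ) : Finset (ℕ × ℕ) :=
  ((Finset.Icc 1 n) ×ˢ (Finset.Icc 1 ((Finset.Icc 1 n).sup h))).filter fun c => c.2 ≤ h c.1

/-- `k`-file placements on a board: `k` cells, at most one per column. -/
def filePl (B : Finset (ℕ × ℕ)) (k : ℕ) : Finset (Finset (ℕ × ℕ)) :=
  B.powerset.filter fun P => P.card = k ∧ ∀ c ∈ P, ∀ d ∈ P, c.1 = d.1 → c = d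

/-- `v(c)`: number of cells of `P` strictly to the left of `c` in the same row. -/
def vP (P : Finset (ℕ × ℕ)) (c : ℕ × ℕ) : ℕ := (P.filter fun d => d.1 < c.1 ∧ d.2 = c.2).card

/-- `r_c(P)`: number of cells of `P` strictly to the left of and strictly above `c`. -/
def rcP (P : Finset (ℕ × ℕ)) (c : ℕ × ℕ) : ℕ := (P.filter fun d => d.1 < c.1 ∧ c.2 < d.2).card

/-- Elliptic weight of a cell in the alpha-parameter model. -/
def cellWt (a b q p : ℂ) (α : ℤ) (P : Finset (ℕ × ℕ)) (c : ℕ × ℕ) : ℂ :=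
  if ∃ d ∈ P, d.1 = c.1 ∧ c.2 < d.2 then 1
  else
    if c ∈ P then
      en (a * q ^ (2 * (-(c.2 : ℤ) + (α - 1) * (1 - (c.1 : ℤ) + (rcP P c : ℤ)))))
        (b * q ^ (-(c.2 : ℤ) + (α - 1) * (1 - (c.1 : ℤ) + (rcP P c : ℤ)))) q p
        ((α - 1) * (vP P c : ℤ) + 1)
    else
      eW (a * q ^ (2 * (-(c.2 : ℤ) + (α - 1) * (1 - (c.1 : ℤ) + (rcP P c : ℤ)))))
        (b * q ^ (-(c.2 : ℤ) + (α - 1) * (1 - (c.1 : ℤ) + (rcP P c : ℤ)))) q p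
        ((α - 1) * (vP P c : ℤ) + 1)

/-- The elliptic alpha-parameter rook number `r_k^{(α)}(a,b;q,p;B)` for the board with
`n` columns of heights `h 1, …, h n`; it is `0` for `k < 0`. -/
def rAlpha (a b q p : ℂ) (α : ℤ) (n : ℕ) (h : ℕ → ℕ) (k : ℤ) : ℂ :=
  if 0 ≤ k then
    ∑ P ∈ filePl (ferrers n h) k.toNat, ∏ c ∈ ferrers n h, cellWt a b q p α P c
  else 0

/-- q-weight of a cell in the alpha-parameter model. -/
def qCellWt (q : ℂ) (α : ℤ) (P : Finset (ℕ × ℕ)) (c : ℕ × ℕ) : ℂ :=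
  if ∃ d ∈ P, d.1 = c.1 ∧ c.2 < d.2 then 1
  else if c ∈ P then qInt q ((α - 1) * (vP P c : ℤ) + 1)
  else q ^ ((α - 1) * (vP P c : ℤ) + 1)

/-- The q-analogue `R_k^{(α)}(q;B)` of the alpha-parameter rook numbers. -/
def Rq (q : ℂ) (α : ℤ) (n : ℕ) (h : ℕ → ℕ) (k : ℕ) : ℂ :=
  ∑ P ∈ filePl (ferrers n h) k, ∏ c ∈ ferrers n h, qCellWt q α P c

/-- a;q-weight of a cell in the α = 2 model. -/
def aqCellWt (a q : ℂ) (P : Finset (ℕ × ℕ)) (c : ℕ × ℕ) : ℂ :=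
  if ∃ d ∈ P, d.1 = c.1 ∧ c.2 < d.2 then 1
  else
    if c ∈ P then
      aqNum (a * q ^ (2 * (-(c.2 : ℤ) + 1 - (c.1 : ℤ) + (rcP P c : ℤ)))) q ((vP P c : ℤ) + 1)
    else
      aqW (a * q ^ (2 * (-(c.2 : ℤ) + 1 - (c.1 : ℤ) + (rcP P c : ℤ)))) q ((vP P c : ℤ) + 1)

/-- Heights of the staircase board `St_n = B(0,1,…,n-1)`. -/
def stH : ℕ → ℕ := fun i => i - 1

/-- `r_k^{(2)}(a,q;St_n)`. -/
def r2aq (a q : ℂ) (n k : ℕ) : ℂ :=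
  ∑ P ∈ filePl (ferrers n stH) k, ∏ c ∈ ferrers n stH, aqCellWt a q P c

/-- The 2-creation rook number `r_k^{(2)}(St_n)` of the staircase board. -/
def r2Nat (n k : ℕ) : ℕ :=
  ∑ P ∈ filePl (ferrers n stH) k,
    ∏ r ∈ Finset.Icc 1 n, (P.filter fun c => c.2 = r).card.factorial

/-! l-shifted boards and rook theory for matchings.
Cells are written `(i, j)` for row `i` and column `j` in the original labelling. -/

/-- `L j = l 1 + ⋯ + l j`. -/
def Lsum (l : ℕ → ℕ) (j : ℕ) : ℕ := ∑ s ∈ Finset.Icc 1 j, l s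

/-- The l-shifted skyline/Ferrers board `B(A 1, …, A N) ⊆ B_N^l`. -/
def lFerrers (N : ℕ) (l A : ℕ → ℕ) : Finset (ℕ × ℕ) :=
  (Finset.Icc 1 N).biUnion fun i =>
    (Finset.Icc 1 (A i)).image fun j =>
      (Lsum l N - Lsum l (N - i + 1) + 1, Lsum l N - Lsum l (N - i + 1) + 1 + j)

/-- Nonattacking condition for rook placements on shifted boards. -/
def nonatt (P : Finset (ℕ × ℕ)) : Prop :=
  ∀ c ∈ P, ∀ d ∈ P, c ≠ d → c.1 ≠ d.1 ∧ c.2 ≠ d.2 ∧ c.2 ≠ d.1 ∧ d.2 ≠ c.1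

/-- `M_k(B)`: placements of `k` nonattacking rooks on `B`. -/
def Mk (B : Finset (ℕ × ℕ)) (k : ℕ) : Finset (Finset (ℕ × ℕ)) :=
  B.powerset.filter fun P => P.card = k ∧ nonatt P

/-- A rook at `(i,j) ∈ P` cancels the cells `(i,s)` with `i < s < j` and the cells
`(t,j)` and `(t,i)` with `t < i`. -/
def cancelled (P : Finset (ℕ × ℕ)) (c : ℕ × ℕ) : Prop :=
  ∃ d ∈ P, (d.1 = c.1 ∧ d.1 < c.2 ∧ c.2 < d.2) ∨ (c.1 < d.1 ∧ (c.2 = d.2 ∨ c.2 = d.1))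

/-- The cells of `B` neither in `P` nor cancelled by a rook of `P`. -/
def uncancelled (B P : Finset (ℕ × ℕ)) : Finset (ℕ × ℕ) :=
  B.filter fun c => c ∉ P ∧ ¬cancelled P c

/-- `m_k(q;B) = Σ_P q^{u_B(P)}`. -/
def mq (q : ℂ) (B : Finset (ℕ × ℕ)) (k : ℕ) : ℂ :=
  ∑ P ∈ Mk B k, q ^ (uncancelled B P).card

/-- The w-row (bottom-to-top index) of the original row labelled `r` in `B_N^l`:
rows are labelled `L_N + 1 - L_{i'}` for the w-row `i'`. -/
def wRow (N : ℕ) (l : ℕ → ℕ) (r : ℕ) : ℕ :=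
  ((Finset.Icc 1 N).filter fun t => Lsum l t ≤ Lsum l N + 1 - r).card

/-- Number of rooks south-east of `c` both of whose cancelled columns are to the right of
the w-column of `c` (in original coordinates: row and column larger than those of `c`,
and the rook's own row label, as a column, also larger than the column of `c`). -/
def rse (P : Finset (ℕ × ℕ)) (c : ℕ × ℕ) : ℕ :=
  (P.filter fun d => c.1 < d.1 ∧ c.2 < d.2 ∧ c.2 < d.1).card

/-- Number of rooks south-east of `c` exactly one of whose cancelled columns is to the
right of the w-column of `c`. -/
def sse (P : Finset (ℕ × ℕ)) (c : ℕ × ℕ) : ℕ :=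
  (P.filter fun d => c.1 < d.1 ∧ c.2 < d.2 ∧ d.1 ≤ c.2).card

/-- The elliptic matchings number `m_k^{(l)}(a,b;q,p;B)`: for a cell of `B_N^l`
in original coordinates `(r,c)`, its w-coordinates are `i = wRow N l r` and
`j = L_N + 2 - c`, and the uncancelled cells get the small weight with argument
`i + j - 1 - l i - 2 r_{(i,j)}(P) - s_{(i,j)}(P)`. -/
def mEll (a b q p : ℂ) (N : ℕ) (l : ℕ → ℕ) (B : Finset (ℕ × ℕ)) (k : ℕ) : ℂ :=
  ∑ P ∈ Mk B k, ∏ c ∈ uncancelled B P,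
    ew a b q p ((wRow N l c.1 : ℤ) + ((Lsum l N : ℤ) + 2 - (c.2 : ℤ)) - 1
      - (l (wRow N l c.1) : ℤ) - 2 * (rse P c : ℤ) - (sse P c : ℤ))

/-- The a;q-analogue `m_k(a,q;B)` of the matchings number. -/
def mAq (a q : ℂ) (N : ℕ) (l : ℕ → ℕ) (B : Finset (ℕ × ℕ)) (k : ℕ) : ℂ :=
  ∑ P ∈ Mk B k, ∏ c ∈ uncancelled B P,
    waq a q ((wRow N l c.1 : ℤ) + ((Lsum l N : ℤ) + 2 - (c.2 : ℤ)) - 1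
      - (l (wRow N l c.1) : ℤ) - 2 * (rse P c : ℤ) - (sse P c : ℤ))

/-!
Induction on `n`. Adding the column `n + 1`, of height `n`, to `St_n` multiplies the product
side by `[z + 2n]_{a q^{-4n}; q}`. Fix a placement `P` on `St_n` and let `r_m` be the number of
its rooks above row `m`. As `m` runs from `n` down to `0`, the number
`[z + n + m - r_m]_{a q^{2(r_m - n - m)}; q}` (`colFactor`) passes from this new factor to the
factor `[z + n - |P|]_{a q^{-2(n-|P|)}; q}` that the rook side gains when the new column stays
empty. Each step down is the addition rule `[m + k]_x = [k]_x + W_x(k) [m]_{x q^{2k}}` with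
`k = v(c) + 1`, whose two terms are the weights of putting the rook in the current cell `c` of
the new column or leaving `c` empty; telescoping over the column gives the induction step.
-/

theorem aqNum_add_eq (x q : ℂ) (hq : q ≠ 0) (k m : ℤ) (hx : 1 - x * q ^ (2 * k + 1) ≠ 0) :
    aqNum x q (m + k) = aqNum x q k + aqW x q k * aqNum (x * q ^ (2 * k)) q m := by
  rcases eq_or_ne q 1 with rfl | hq1
  · simp [aqNum]
  rcases eq_or_ne (1 - x * q) 0 with hxq | hxq
  · simp [aqNum, aqW, hxq]
  have h1q : (1 : ℂ) - q ≠ 0 := sub_ne_zero.mpr hq1.symm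
  have hu := zpow_ne_zero k hq
  have hv := zpow_ne_zero m hq
  simp only [aqNum, aqW, zpow_add₀ hq, zpow_sub₀ hq, zpow_neg, mul_comm 2 k,
    zpow_mul, zpow_ofNat, pow_one] at hx ⊢
  generalize q ^ k = u at *
  generalize q ^ m = v at *
  have hxq' : 1 - q * x ≠ 0 := by rwa [mul_comm]
  have hx' : 1 - q * u ^ 2 * x ≠ 0 := by convert hx using 2; ring
  field_simp
  ring

theorem eq_sum_mul_prod_add_prod_mul_of_succ {R : Type*} [CommSemiring R] (N W A : ℕ → R)
    (h : ∀ m, A (m + 1) = N (m + 1) + W (m + 1) * A m) (m : ℕ) :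
    A m = ∑ j ∈ Finset.Icc 1 m, N j * ∏ i ∈ Finset.Icc (j + 1) m, W i
      + (∏ j ∈ Finset.Icc 1 m, W j) * A 0 := by
  induction m with
  | zero => simp
  | succ m ih =>
    have hW : ∀ j ∈ Finset.Icc 1 m, N j * ∏ i ∈ Finset.Icc (j + 1) (m + 1), W i
        = W (m + 1) * (N j * ∏ i ∈ Finset.Icc (j + 1) m, W i) := fun j hj => by
      rw [Finset.prod_Icc_succ_top (by grind)]
      ring
    rw [Finset.sum_Icc_succ_top (by omega), Finset.sum_congr rfl hW, ← Finset.mul_sum,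
      Finset.Icc_eq_empty (show ¬m + 1 + 1 ≤ m + 1 by omega), Finset.prod_empty,
      Finset.prod_Icc_succ_top (by omega), h, ih]
    ring

theorem mem_ferrers {n : ℕ} {h : ℕ → ℕ} {c : ℕ × ℕ} :
    c ∈ ferrers n h ↔ 1 ≤ c.1 ∧ c.1 ≤ n ∧ 1 ≤ c.2 ∧ c.2 ≤ h c.1 := by
  simp only [ferrers, Finset.mem_filter, Finset.mem_product, Finset.mem_Icc]
  constructor
  · rintro ⟨⟨⟨h1, h2⟩, h3, -⟩, h4⟩
    exact ⟨h1, h2, h3, h4⟩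
  · rintro ⟨h1, h2, h3, h4⟩
    exact ⟨⟨⟨h1, h2⟩, h3, h4.trans (Finset.le_sup (Finset.mem_Icc.mpr ⟨h1, h2⟩))⟩, h4⟩

theorem ferrers_succ (n : ℕ) (h : ℕ → ℕ) :
    ferrers (n + 1) h = ferrers n h ∪ (Finset.Icc 1 (h (n + 1))).image (Prod.mk (n + 1)) := by
  ext ⟨i, j⟩
  simp only [mem_ferrers, Finset.mem_union, Finset.mem_image, Finset.mem_Icc, Prod.mk.injEq]
  constructor
  · rintro ⟨h1, h2, h3, h4⟩
    rcases Nat.lt_or_ge n i with hi | hi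
    · obtain rfl : i = n + 1 := by omega
      exact Or.inr ⟨j, ⟨h3, h4⟩, rfl, rfl⟩
    · exact Or.inl ⟨h1, hi, h3, h4⟩
  · rintro (⟨h1, h2, h3, h4⟩ | ⟨j, hj, rfl, rfl⟩)
    · exact ⟨h1, by omega, h3, h4⟩
    · exact ⟨by omega, le_rfl, hj⟩

theorem prod_ferrers_succ {M : Type*} [CommMonoid M] (n : ℕ) (h : ℕ → ℕ) (f : ℕ × ℕ → M) :
    ∏ c ∈ ferrers (n + 1) h, f c
      = (∏ c ∈ ferrers n h, f c) * ∏ j ∈ Finset.Icc 1 (h (n + 1)), f (n + 1, j) := by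
  have hdisj : Disjoint (ferrers n h) ((Finset.Icc 1 (h (n + 1))).image (Prod.mk (n + 1))) := by
    simp only [Finset.disjoint_right, Finset.mem_image, mem_ferrers]
    rintro _ ⟨j, -, rfl⟩ hc
    omega
  rw [ferrers_succ, Finset.prod_union hdisj, Finset.prod_image (by simp)]

def filePlacements (B : Finset (ℕ × ℕ)) : Finset (Finset (ℕ × ℕ)) :=
  B.powerset.filter fun P => ∀ c ∈ P, ∀ d ∈ P, c.1 = d.1 → c = d

theorem mem_filePlacements {B P : Finset (ℕ × ℕ)} :
    P ∈ filePlacements B ↔ P ⊆ B ∧ ∀ c ∈ P, ∀ d ∈ P, c.1 = d.1 → c = d := by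
  simp [filePlacements]

theorem mem_filePl {B P : Finset (ℕ × ℕ)} {k : ℕ} :
    P ∈ filePl B k ↔ P ∈ filePlacements B ∧ P.card = k := by
  simp only [filePl, mem_filePlacements, Finset.mem_filter, Finset.mem_powerset]
  tauto

theorem card_le_of_mem_filePlacements {n : ℕ} {h : ℕ → ℕ} {P : Finset (ℕ × ℕ)}
    (hP : P ∈ filePlacements (ferrers n h)) : P.card ≤ n := by
  obtain ⟨hsub, hcol⟩ := mem_filePlacements.mp hP
  calc P.card ≤ (Finset.Icc 1 n).card :=
        Finset.card_le_card_of_injOn Prod.fst (fun c hc => by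
          have := mem_ferrers.mp (hsub hc)
          simp only [Finset.coe_Icc, Set.mem_Icc]
          omega) hcol
    _ = n := by simp

theorem sum_filePl_eq_sum_filePlacements {M : Type*} [AddCommMonoid M] (n : ℕ) (h : ℕ → ℕ)
    (F : Finset (ℕ × ℕ) → M) :
    ∑ k ∈ Finset.range (n + 1), ∑ P ∈ filePl (ferrers n h) k, F P
      = ∑ P ∈ filePlacements (ferrers n h), F P := by
  rw [← Finset.sum_fiberwise_of_maps_to (g := Finset.card) (t := Finset.range (n + 1))
    fun P hP => Finset.mem_range_succ_iff.mpr (card_le_of_mem_filePlacements hP)]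
  refine Finset.sum_congr rfl fun k _ => Finset.sum_congr ?_ fun _ _ => rfl
  ext P
  simp [mem_filePl]

theorem fst_le_of_mem_filePlacements {n : ℕ} {h : ℕ → ℕ} {P : Finset (ℕ × ℕ)}
    (hP : P ∈ filePlacements (ferrers n h)) {d : ℕ × ℕ} (hd : d ∈ P) : d.1 ≤ n :=
  (mem_ferrers.mp ((mem_filePlacements.mp hP).1 hd)).2.1

theorem insert_mem_filePlacements_ferrers_succ {n : ℕ} {h : ℕ → ℕ} {P : Finset (ℕ × ℕ)}
    (hP : P ∈ filePlacements (ferrers n h)) {j : ℕ} (hj : j ∈ Finset.Icc 1 (h (n + 1))) :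
    insert (n + 1, j) P ∈ filePlacements (ferrers (n + 1) h) := by
  have hcol := fun d (hd : d ∈ P) => fst_le_of_mem_filePlacements hP hd
  obtain ⟨hsub, hone⟩ := mem_filePlacements.mp hP
  refine mem_filePlacements.mpr ⟨Finset.insert_subset ?_ (hsub.trans ?_), ?_⟩
  · rw [ferrers_succ]
    exact Finset.mem_union_right _ (Finset.mem_image_of_mem _ hj)
  · rw [ferrers_succ]
    exact Finset.subset_union_left
  · simp only [Finset.mem_insert]
    rintro c (rfl | hc) d (rfl | hd) hcd
    · rfl
    · exact absurd hcd (by have := hcol d hd; simp only; omega)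
    · exact absurd hcd (by have := hcol c hc; simp only; omega)
    · exact hone c hc d hd hcd

theorem filePlacements_ferrers_succ (n : ℕ) (h : ℕ → ℕ) :
    filePlacements (ferrers (n + 1) h) = filePlacements (ferrers n h) ∪
      (filePlacements (ferrers n h) ×ˢ Finset.Icc 1 (h (n + 1))).image
        fun p => insert (n + 1, p.2) p.1 := by
  ext P
  simp only [Finset.mem_union, Finset.mem_image, Finset.mem_product, Prod.exists]
  constructor
  · intro hP
    obtain ⟨hsub, hone⟩ := mem_filePlacements.mp hP
    by_cases hlast : ∃ c ∈ P, c.1 = n + 1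
    · obtain ⟨c, hc, hc1⟩ := hlast
      have hc' := mem_ferrers.mp (hsub hc)
      refine Or.inr ⟨P.erase c, c.2, ⟨mem_filePlacements.mpr ⟨fun d hd => ?_, fun d hd e he =>
        hone d (Finset.mem_of_mem_erase hd) e (Finset.mem_of_mem_erase he)⟩, ?_⟩, ?_⟩
      · have hd' := mem_ferrers.mp (hsub (Finset.mem_of_mem_erase hd))
        have hdc : d.1 ≠ c.1 := fun hdc =>
          Finset.ne_of_mem_erase hd (hone d (Finset.mem_of_mem_erase hd) c hc hdc)
        exact mem_ferrers.mpr ⟨hd'.1, by omega, hd'.2.2⟩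
      · exact Finset.mem_Icc.mpr ⟨hc'.2.2.1, hc1 ▸ hc'.2.2.2⟩
      · rw [← hc1, Finset.insert_erase hc]
    · push Not at hlast
      refine Or.inl (mem_filePlacements.mpr ⟨fun d hd => ?_, hone⟩)
      have hd' := mem_ferrers.mp (hsub hd)
      exact mem_ferrers.mpr ⟨hd'.1, by have := hlast d hd; omega, hd'.2.2⟩
  · rintro (hP | ⟨Q, j, ⟨hQ, hj⟩, rfl⟩)
    · obtain ⟨hsub, hone⟩ := mem_filePlacements.mp hP
      rw [ferrers_succ]
      exact mem_filePlacements.mpr ⟨hsub.trans Finset.subset_union_left, hone⟩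
    · exact insert_mem_filePlacements_ferrers_succ hQ hj

theorem sum_filePlacements_ferrers_succ {M : Type*} [AddCommMonoid M] (n : ℕ) (h : ℕ → ℕ)
    (F : Finset (ℕ × ℕ) → M) :
    ∑ P ∈ filePlacements (ferrers (n + 1) h), F P
      = ∑ P ∈ filePlacements (ferrers n h),
          (F P + ∑ j ∈ Finset.Icc 1 (h (n + 1)), F (insert (n + 1, j) P)) := by
  have hdisj : Disjoint (filePlacements (ferrers n h))
      ((filePlacements (ferrers n h) ×ˢ Finset.Icc 1 (h (n + 1))).image
        fun p => insert (n + 1, p.2) p.1) := by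
    simp only [Finset.disjoint_right, Finset.mem_image, Finset.mem_product, Prod.exists]
    rintro _ ⟨Q, j, -, rfl⟩ hP
    exact absurd (fst_le_of_mem_filePlacements hP (Finset.mem_insert_self _ _)) (by simp)
  have hinj : Set.InjOn (fun p : Finset (ℕ × ℕ) × ℕ => insert (n + 1, p.2) p.1)
      ↑(filePlacements (ferrers n h) ×ˢ Finset.Icc 1 (h (n + 1))) := by
    rintro ⟨P, j⟩ hP ⟨P', j'⟩ hP' heq
    simp only [Finset.coe_product, Set.mem_prod, Finset.mem_coe] at hP hP' heq
    have hrestrict : ∀ Q ∈ filePlacements (ferrers n h), ∀ i,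
        (insert (n + 1, i) Q).filter (·.1 ≤ n) = Q := fun Q hQ i => by
      rw [Finset.filter_insert, if_neg (by simp), Finset.filter_true_of_mem
        fun d hd => fst_le_of_mem_filePlacements hQ hd]
    have hj : (n + 1, j) ∈ insert (n + 1, j') P' := heq ▸ Finset.mem_insert_self _ _
    rcases Finset.mem_insert.mp hj with hjj | hjP
    · rw [Prod.mk.injEq] at hjj
      rw [← hrestrict P hP.1 j, ← hrestrict P' hP'.1 j', heq, hjj.2]
    · exact absurd (fst_le_of_mem_filePlacements hP'.1 hjP) (by simp)
  rw [filePlacements_ferrers_succ, Finset.sum_union hdisj, Finset.sum_image hinj,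
    Finset.sum_product, ← Finset.sum_add_distrib]

theorem vP_insert_of_le {P : Finset (ℕ × ℕ)} {c d : ℕ × ℕ} (h : c.1 ≤ d.1) :
    vP (insert d P) c = vP P c := by
  rw [vP, Finset.filter_insert, if_neg (by omega), vP]

theorem rcP_insert_of_le {P : Finset (ℕ × ℕ)} {c d : ℕ × ℕ} (h : c.1 ≤ d.1) :
    rcP (insert d P) c = rcP P c := by
  rw [rcP, Finset.filter_insert, if_neg (by omega), rcP]

theorem rcP_eq_rcP_succ_add_vP (P : Finset (ℕ × ℕ)) (i m : ℕ) :
    rcP P (i, m) = rcP P (i, m + 1) + vP P (i, m + 1) := by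
  rw [rcP, rcP, vP, ← Finset.card_union_of_disjoint (Finset.disjoint_filter.mpr (by omega)),
    ← Finset.filter_or]
  congr 1
  exact Finset.filter_congr fun d _ => by omega

theorem rcP_eq_zero {P : Finset (ℕ × ℕ)} {i m : ℕ} (h : ∀ d ∈ P, d.2 ≤ m) : rcP P (i, m) = 0 :=
  Finset.card_eq_zero.mpr (Finset.filter_eq_empty_iff.mpr fun d hd => by have := h d hd; omega)

theorem rcP_zero {P : Finset (ℕ × ℕ)} {i : ℕ} (h : ∀ d ∈ P, d.1 < i ∧ 1 ≤ d.2) :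
    rcP P (i, 0) = P.card := by
  rw [rcP]
  exact congrArg Finset.card (Finset.filter_true_of_mem h)

section

variable (a q : ℂ)

theorem aqCellWt_insert_of_fst_lt {P : Finset (ℕ × ℕ)} {c d : ℕ × ℕ} (h : c.1 < d.1) :
    aqCellWt a q (insert d P) c = aqCellWt a q P c := by
  have hcd : c ≠ d := ne_of_apply_ne Prod.fst h.ne
  simp only [aqCellWt, vP_insert_of_le h.le, rcP_insert_of_le h.le, Finset.mem_insert, hcd,
    or_and_right, exists_or, exists_eq_left, h.ne', false_and, false_or]

theorem aqCellWt_of_forall_fst_ne {P : Finset (ℕ × ℕ)} {i : ℕ} (hP : ∀ e ∈ P, e.1 ≠ i) (j : ℕ) :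
    aqCellWt a q P (i, j) =
      aqW (a * q ^ (2 * (-(j : ℤ) + 1 - i + rcP P (i, j)))) q (vP P (i, j) + 1) := by
  rw [aqCellWt, if_neg (fun ⟨e, he, hei, _⟩ => hP e he hei), if_neg (fun hm => hP _ hm rfl)]

theorem aqCellWt_insert_self {P : Finset (ℕ × ℕ)} {i : ℕ} (hP : ∀ e ∈ P, e.1 ≠ i) (j : ℕ) :
    aqCellWt a q (insert (i, j) P) (i, j) =
      aqNum (a * q ^ (2 * (-(j : ℤ) + 1 - i + rcP P (i, j)))) q (vP P (i, j) + 1) := by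
  rw [aqCellWt, if_neg, if_pos (Finset.mem_insert_self _ _), vP_insert_of_le le_rfl,
    rcP_insert_of_le le_rfl]
  rintro ⟨e, he, hei, hej⟩
  rcases Finset.mem_insert.mp he with rfl | he
  · exact lt_irrefl _ hej
  · exact hP e he hei

theorem aqCellWt_insert_above {P : Finset (ℕ × ℕ)} {i j₀ j : ℕ} (hj : j₀ < j)
    (hP : ∀ e ∈ P, e.1 ≠ i) :
    aqCellWt a q (insert (i, j₀) P) (i, j) = aqCellWt a q P (i, j) := by
  rw [aqCellWt_of_forall_fst_ne a q hP, aqCellWt, if_neg, if_neg,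
    vP_insert_of_le (c := (i, j)) (d := (i, j₀)) le_rfl,
    rcP_insert_of_le (c := (i, j)) (d := (i, j₀)) le_rfl]
  · intro hm
    rcases Finset.mem_insert.mp hm with hm | hm
    · exact hj.ne' (Prod.mk.inj hm).2
    · exact hP _ hm rfl
  · rintro ⟨e, he, hei, hej⟩
    rcases Finset.mem_insert.mp he with rfl | he
    · exact lt_asymm hj hej
    · exact hP e he hei

theorem aqCellWt_insert_below (P : Finset (ℕ × ℕ)) {i j₀ j : ℕ} (hj : j < j₀) :
    aqCellWt a q (insert (i, j₀) P) (i, j) = 1 :=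
  if_pos ⟨(i, j₀), Finset.mem_insert_self _ _, rfl, hj⟩

theorem prod_aqCellWt_insert_column {P : Finset (ℕ × ℕ)} {i j₀ m : ℕ}
    (hP : ∀ e ∈ P, e.1 ≠ i) (hj₀ : j₀ ∈ Finset.Icc 1 m) :
    ∏ j ∈ Finset.Icc 1 m, aqCellWt a q (insert (i, j₀) P) (i, j)
      = aqCellWt a q (insert (i, j₀) P) (i, j₀)
          * ∏ j ∈ Finset.Icc (j₀ + 1) m, aqCellWt a q P (i, j) := by
  rw [← Finset.prod_filter_mul_prod_filter_not _ (· < j₀),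
    Finset.prod_eq_one fun j hj => aqCellWt_insert_below a q P (Finset.mem_filter.mp hj).2,
    one_mul]
  have hIcc : (Finset.Icc 1 m).filter (¬· < j₀) = insert j₀ (Finset.Icc (j₀ + 1) m) := by
    ext j
    simp only [Finset.mem_filter, Finset.mem_Icc, Finset.mem_insert] at hj₀ ⊢
    omega
  rw [hIcc, Finset.prod_insert (by simp)]
  exact congrArg _ (Finset.prod_congr rfl fun j hj =>
    aqCellWt_insert_above a q (by simp at hj; omega) hP)

def colFactor (z : ℤ) (P : Finset (ℕ × ℕ)) (i m : ℕ) : ℂ :=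
  aqNum (a * q ^ (2 * (1 - (i : ℤ) - m + rcP P (i, m)))) q (z + i - 1 + m - rcP P (i, m))

variable {a q}

theorem colFactor_succ (hq : q ≠ 0) (hden : ∀ j : ℤ, 1 - a * q ^ (2 * j + 1) ≠ 0) (z : ℤ)
    {P : Finset (ℕ × ℕ)} {i : ℕ} (hP : ∀ e ∈ P, e.1 ≠ i) (m : ℕ) :
    colFactor a q z P i (m + 1)
      = aqCellWt a q (insert (i, m + 1) P) (i, m + 1)
        + aqCellWt a q P (i, m + 1) * colFactor a q z P i m := by
  rw [aqCellWt_insert_self a q hP, aqCellWt_of_forall_fst_ne a q hP, colFactor, colFactor,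
    rcP_eq_rcP_succ_add_vP P i m]
  set e : ℤ := -((m + 1 : ℕ) : ℤ) + 1 - i + rcP P (i, m + 1)
  set k : ℤ := vP P (i, m + 1) + 1
  have hx : 1 - a * q ^ (2 * e) * q ^ (2 * k + 1) ≠ 0 := by
    rw [mul_assoc, ← zpow_add₀ hq, show 2 * e + (2 * k + 1) = 2 * (e + k) + 1 by ring]
    exact hden _
  have key := aqNum_add_eq (a * q ^ (2 * e)) q hq k
    (z + i - 1 + m - ↑(rcP P (i, m + 1) + vP P (i, m + 1))) hx
  rw [mul_assoc, ← zpow_add₀ hq] at key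
  convert key using 4 <;> simp only [e, k] <;> push_cast <;> ring_nf

theorem colFactor_eq (hq : q ≠ 0) (hden : ∀ j : ℤ, 1 - a * q ^ (2 * j + 1) ≠ 0) (z : ℤ)
    {P : Finset (ℕ × ℕ)} {i : ℕ} (hP : ∀ e ∈ P, e.1 ≠ i) (m : ℕ) :
    colFactor a q z P i m
      = ∑ j₀ ∈ Finset.Icc 1 m, ∏ j ∈ Finset.Icc 1 m, aqCellWt a q (insert (i, j₀) P) (i, j)
        + (∏ j ∈ Finset.Icc 1 m, aqCellWt a q P (i, j)) * colFactor a q z P i 0 := by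
  rw [eq_sum_mul_prod_add_prod_mul_of_succ (fun j => aqCellWt a q (insert (i, j) P) (i, j))
    (fun j => aqCellWt a q P (i, j)) (colFactor a q z P i) (colFactor_succ hq hden z hP) m]
  congr 1
  exact Finset.sum_congr rfl fun j₀ hj₀ => (prod_aqCellWt_insert_column a q hP hj₀).symm

variable (a q)

def aqRising (z : ℤ) (m : ℕ) : ℂ :=
  ∏ i ∈ Finset.Icc 1 m, aqNum (a * q ^ (-2 * ((i : ℤ) - 1))) q (z + (i : ℤ) - 1)

theorem aqRising_succ (z : ℤ) (m : ℕ) :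
    aqRising a q z (m + 1) = aqRising a q z m * aqNum (a * q ^ (-2 * (m : ℤ))) q (z + m) := by
  rw [aqRising, Finset.prod_Icc_succ_top (by omega), aqRising]
  congr 1
  push_cast
  ring_nf

theorem colFactor_ferrers_stH (z : ℤ) {n : ℕ} {P : Finset (ℕ × ℕ)}
    (hP : P ∈ filePlacements (ferrers n stH)) :
    colFactor a q z P (n + 1) n
      = aqNum (a * q ^ (-4 * (((n + 1 : ℕ) : ℤ) - 1))) q (z + 2 * (((n + 1 : ℕ) : ℤ) - 1)) := by
  rw [colFactor, rcP_eq_zero fun d hd => ?_]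
  · push_cast
    ring_nf
  · have := mem_ferrers.mp ((mem_filePlacements.mp hP).1 hd)
    simp only [stH] at this
    omega

theorem aqRising_sub_card_eq_mul_colFactor (z : ℤ) {n : ℕ} {h : ℕ → ℕ} {P : Finset (ℕ × ℕ)}
    (hP : P ∈ filePlacements (ferrers n h)) :
    aqRising a q z (n + 1 - P.card)
      = aqRising a q z (n - P.card) * colFactor a q z P (n + 1) 0 := by
  have hk := card_le_of_mem_filePlacements hP
  rw [colFactor, rcP_zero fun d hd => ?_, show n + 1 - P.card = n - P.card + 1 by omega,
    aqRising_succ]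
  · push_cast [hk]
    ring_nf
  · have := mem_ferrers.mp ((mem_filePlacements.mp hP).1 hd)
    exact ⟨by omega, this.2.2.1⟩

variable {a q}

theorem prod_aqNum_eq_sum_filePlacements (hq : q ≠ 0)
    (hden : ∀ j : ℤ, 1 - a * q ^ (2 * j + 1) ≠ 0) (z : ℤ) (n : ℕ) :
    ∏ j ∈ Finset.Icc 1 n, aqNum (a * q ^ (-4 * ((j : ℤ) - 1))) q (z + 2 * ((j : ℤ) - 1))
      = ∑ P ∈ filePlacements (ferrers n stH),
          (∏ c ∈ ferrers n stH, aqCellWt a q P c) * aqRising a q z (n - P.card) := by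
  induction n with
  | zero => simp [filePlacements, aqRising, ferrers, Finset.filter_singleton]
  | succ n ih =>
    have hstH : stH (n + 1) = n := rfl
    rw [Finset.prod_Icc_succ_top (by omega), ih, Finset.sum_mul, sum_filePlacements_ferrers_succ]
    refine Finset.sum_congr rfl fun P hP => ?_
    have hcol : ∀ e ∈ P, e.1 ≠ n + 1 := fun e he => by
      have := fst_le_of_mem_filePlacements hP he
      omega
    have hwt : ∀ j, ∏ c ∈ ferrers n stH, aqCellWt a q (insert (n + 1, j) P) c
        = ∏ c ∈ ferrers n stH, aqCellWt a q P c := fun j =>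
      Finset.prod_congr rfl fun c hc =>
        aqCellWt_insert_of_fst_lt a q (by have := (mem_ferrers.mp hc).2.1; simp only; omega)
    have hcard : ∀ j, (insert (n + 1, j) P).card = P.card + 1 := fun j =>
      Finset.card_insert_of_notMem fun hm => hcol _ hm rfl
    simp only [prod_ferrers_succ, hstH, hwt, hcard, aqRising_sub_card_eq_mul_colFactor a q z hP,
      ← colFactor_ferrers_stH a q z hP, colFactor_eq hq hden z hcol n,
      show n + 1 - (P.card + 1) = n - P.card by omega]
    rw [mul_add, add_comm, Finset.mul_sum]
    congr 1
    · ring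
    · exact Finset.sum_congr rfl fun _ _ => by ring

end

theorem aq_alpha_two_product_general (q a : ℂ) (hq : q ≠ 0)
    (hden : ∀ j : ℤ, 1 - a * q ^ (2 * j + 1) ≠ 0)
    (n : ℕ) (z : ℤ) :
    ∏ j ∈ Finset.Icc 1 n, aqNum (a * q ^ (-4 * ((j : ℤ) - 1))) q (z + 2 * ((j : ℤ) - 1))
      = ∑ k ∈ Finset.range (n + 1),
          r2aq a q n k
            * ∏ i ∈ Finset.Icc 1 (n - k),
                aqNum (a * q ^ (-2 * ((i : ℤ) - 1))) q (z + (i : ℤ) - 1) := by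
  rw [prod_aqNum_eq_sum_filePlacements hq hden z n, ← sum_filePl_eq_sum_filePlacements]
  refine Finset.sum_congr rfl fun k _ => ?_
  rw [r2aq, Finset.sum_mul]
  refine Finset.sum_congr rfl fun P hP => ?_
  rw [(mem_filePl.mp hP).2]
  rfl

/-- a,q-analogue of the alpha-factorization theorem for α = 2 and the staircase board. -/
theorem aq_alpha_two_product (q a : ℂ) (hq : q ≠ 0) (hq1 : q ≠ 1) (ha : a ≠ 0)
    (hden : ∀ j : ℤ, 1 - a * q ^ (2 * j + 1) ≠ 0)
    (n : ℕ) (z : ℤ) :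
    ∏ j ∈ Finset.Icc 1 n, aqNum (a * q ^ (-4 * ((j : ℤ) - 1))) q (z + 2 * ((j : ℤ) - 1))
      = ∑ k ∈ Finset.range (n + 1),
          r2aq a q n k
            * ∏ i ∈ Finset.Icc 1 (n - k),
                aqNum (a * q ^ (-2 * ((i : ℤ) - 1))) q (z + (i : ℤ) - 1) :=
  aq_alpha_two_product_general q a hq hden n z

end EllRook
end
end

section
/- Let l = (l_1,…,l_N) be a vector of positive integers and B = B(a_1,…,a_N) an l-shifted Ferrers board contained in B_N^l. Then for every integer z and every nonzero complex q with q ≠ 1, ∏_{i=1}^{N} [z + a_{N−i+1} − 2i + 2]_q = Σ_{k=0}^{N} m_k^{(l)}(q;B) · [z]_q↓↓_{N−k}, where [z]_q↓↓_k = ∏_{j=1}^{k} [z − 2j + 2]_q. -/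
open scoped BigOperators Classical

noncomputable section
namespace EllRook

/-!
Split off the first row of the board: its label is `r = p 1` and its cells lie in the columns
`r + 1, …, r + a₁`, and the nesting condition puts every other cell `(i, j)` in the range
`r < i < j ≤ r + a₁`. A rook at `(i, j)` on the lower rows cancels exactly the two first-row cells
`(r, i)` and `(r, j)`, so `k` nonattacking rooks below leave `a₁ - 2k` free cells in the first row.
If the first row holds no rook, these stay uncancelled; a rook in the free column `x` cancels the
free cells to its left, and summing `q ^ #{free cells right of x}` over `x` gives `[a₁ - 2k]_q`.
Hence `m_k(B) = q^(a₁-2k) m_k(B') + [a₁-2k+2]_q m_(k-1)(B')`. With `[x + y]_q = q^x [y]_q + [x]_q`,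
this proves the product formula by induction on the number of rows.
-/

open Finset

theorem sum_comp_card_filter_lt {α M : Type*} [LinearOrder α] [AddCommMonoid M]
    (S : Finset α) (f : ℕ → M) :
    ∑ x ∈ S, f #{y ∈ S | x < y} = ∑ t ∈ range #S, f t := by
  set g : α → ℕ := fun x => #{y ∈ S | x < y}
  have hanti : StrictAntiOn g S := by
    intro x hx y hy hxy
    refine card_lt_card ⟨fun z hz => ?_, fun hsub => ?_⟩
    · simp only [mem_filter] at hz ⊢
      exact ⟨hz.1, hxy.trans hz.2⟩
    · simpa using hsub (mem_filter.2 ⟨hy, hxy⟩)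
  have himage : S.image g = range #S := by
    refine eq_of_subset_of_card_le (fun t ht => ?_) ?_
    · obtain ⟨x, hx, rfl⟩ := mem_image.1 ht
      refine mem_range.2 (card_lt_card ⟨filter_subset _ _, fun hsub => ?_⟩)
      simpa using hsub hx
    · rw [card_range, card_image_of_injOn hanti.injOn]
  rw [← himage, sum_image hanti.injOn]

theorem qInt_natCast {q : ℂ} (hq1 : q ≠ 1) (n : ℕ) :
    qInt q n = ∑ t ∈ range n, q ^ t := by
  have h : (1 : ℂ) - q ≠ 0 := sub_ne_zero.2 hq1.symm
  rw [qInt, zpow_natCast, div_eq_iff h, mul_comm, mul_neg_geom_sum]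

theorem qInt_add {q : ℂ} (hq : q ≠ 0) (x y : ℤ) :
    qInt q (x + y) = q ^ x * qInt q y + qInt q x := by
  simp only [qInt, zpow_add₀ hq]
  ring

/-- The paper's `[z]_q↓↓_n`. -/
def qFalling2 (q : ℂ) (z : ℤ) (n : ℕ) : ℂ := ∏ j ∈ Icc 1 n, qInt q (z - 2 * j + 2)

theorem qFalling2_succ (q : ℂ) (z : ℤ) (n : ℕ) :
    qFalling2 q z (n + 1) = qFalling2 q z n * qInt q (z - 2 * n) := by
  rw [qFalling2, prod_Icc_succ_top (by omega), qFalling2]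
  push_cast
  ring_nf

theorem Lsum_succ (l : ℕ → ℕ) (j : ℕ) : Lsum l (j + 1) = Lsum l j + l (j + 1) :=
  sum_Icc_succ_top (by omega) l

theorem Lsum_mono (l : ℕ → ℕ) : Monotone (Lsum l) :=
  fun _ _ h => sum_le_sum_of_subset (Icc_subset_Icc_right h)

theorem mem_Mk {B P : Finset (ℕ × ℕ)} {k : ℕ} : P ∈ Mk B k ↔ P ⊆ B ∧ #P = k ∧ nonatt P := by
  simp [Mk]

theorem nonatt.injOn_fst {P : Finset (ℕ × ℕ)} (h : nonatt P) :
    Set.InjOn Prod.fst (P : Set (ℕ × ℕ)) :=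
  fun c hc d hd hcd => by_contra fun hne => (h c hc d hd hne).1 hcd

theorem nonatt.injOn_snd {P : Finset (ℕ × ℕ)} (h : nonatt P) :
    Set.InjOn Prod.snd (P : Set (ℕ × ℕ)) :=
  fun c hc d hd hcd => by_contra fun hne => (h c hc d hd hne).2.1 hcd

theorem Mk_zero (B : Finset (ℕ × ℕ)) : Mk B 0 = {∅} := by
  ext P
  simp only [mem_Mk, card_eq_zero, mem_singleton]
  constructor
  · exact fun h => h.2.1
  · rintro rfl
    exact ⟨empty_subset B, rfl, fun c hc => absurd hc (notMem_empty c)⟩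

theorem nonatt_insert {P : Finset (ℕ × ℕ)} {c : ℕ × ℕ} (hP : nonatt P)
    (hc : ∀ d ∈ P, c.1 ≠ d.1 ∧ c.2 ≠ d.2 ∧ c.2 ≠ d.1 ∧ d.2 ≠ c.1) : nonatt (insert c P) := by
  intro d₁ h₁ d₂ h₂ hne
  rcases mem_insert.1 h₁ with rfl | hd₁ <;> rcases mem_insert.1 h₂ with rfl | hd₂
  · exact absurd rfl hne
  · exact hc d₂ hd₂
  · obtain ⟨e1, e2, e3, e4⟩ := hc d₁ hd₁
    exact ⟨e1.symm, e2.symm, e4, e3⟩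
  · exact hP d₁ hd₁ d₂ hd₂ hne

theorem cancelled_insert {P : Finset (ℕ × ℕ)} {c d : ℕ × ℕ} :
    cancelled (insert d P) c ↔
      ((d.1 = c.1 ∧ d.1 < c.2 ∧ c.2 < d.2) ∨ (c.1 < d.1 ∧ (c.2 = d.2 ∨ c.2 = d.1)))
        ∨ cancelled P c := by
  simp only [cancelled, exists_mem_insert]

theorem uncancelled_union (B₁ B₂ P : Finset (ℕ × ℕ)) :
    uncancelled (B₁ ∪ B₂) P = uncancelled B₁ P ∪ uncancelled B₂ P :=
  filter_union _ _ _

theorem disjoint_uncancelled {B₁ B₂ : Finset (ℕ × ℕ)} (h : Disjoint B₁ B₂) (P Q : Finset (ℕ × ℕ)) :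
    Disjoint (uncancelled B₁ P) (uncancelled B₂ Q) :=
  disjoint_filter_filter h

def rowCells (r n : ℕ) : Finset (ℕ × ℕ) := (Icc 1 n).image fun j => (r, r + j)

theorem mem_rowCells {r n : ℕ} {c : ℕ × ℕ} :
    c ∈ rowCells r n ↔ c.1 = r ∧ r < c.2 ∧ c.2 ≤ r + n := by
  simp only [rowCells, mem_image, mem_Icc]
  constructor
  · rintro ⟨j, hj, rfl⟩
    exact ⟨rfl, by omega, by omega⟩
  · rintro ⟨h1, h2, h3⟩
    exact ⟨c.2 - r, by omega, Prod.ext h1.symm (by simp only; omega)⟩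

def blocked (P : Finset (ℕ × ℕ)) : Finset ℕ := P.image Prod.fst ∪ P.image Prod.snd

def UnderRow (r n : ℕ) (B : Finset (ℕ × ℕ)) : Prop :=
  ∀ c ∈ B, r < c.1 ∧ c.1 < c.2 ∧ c.2 ≤ r + n

def freeCols (r n : ℕ) (P : Finset (ℕ × ℕ)) : Finset ℕ := {y ∈ Ioc r (r + n) | y ∉ blocked P}

section UnderRow

variable {r n k : ℕ} {B P : Finset (ℕ × ℕ)}

theorem UnderRow.disjoint_rowCells (hB : UnderRow r n B) : Disjoint (rowCells r n) B :=
  disjoint_left.2 fun c hc hcB => (hB c hcB).1.ne (mem_rowCells.1 hc).1.symm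

theorem UnderRow.card_blocked (hB : UnderRow r n B) (hP : P ∈ Mk B k) : #(blocked P) = 2 * k := by
  obtain ⟨hPB, rfl, hna⟩ := mem_Mk.1 hP
  have hdisj : Disjoint (P.image Prod.fst) (P.image Prod.snd) := by
    simp only [disjoint_left, mem_image, not_exists, not_and]
    rintro _ ⟨c, hc, rfl⟩ d hd hdc
    obtain rfl | hne := eq_or_ne c d
    · exact (hB c (hPB hc)).2.1.ne' hdc
    · exact (hna c hc d hd hne).2.2.2 hdc
  rw [blocked, card_union_of_disjoint hdisj, card_image_of_injOn (nonatt.injOn_fst hna),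
    card_image_of_injOn (nonatt.injOn_snd hna), two_mul]

theorem UnderRow.blocked_subset (hB : UnderRow r n B) (hPB : P ⊆ B) :
    blocked P ⊆ Ioc r (r + n) := by
  simp only [blocked, subset_iff, mem_union, mem_image, mem_Ioc]
  rintro _ (⟨c, hc, rfl⟩ | ⟨c, hc, rfl⟩) <;> have := hB c (hPB hc) <;> omega

theorem UnderRow.natCast_card_freeCols (hB : UnderRow r n B) (hP : P ∈ Mk B k) :
    (#(freeCols r n P) : ℤ) = n - 2 * k := by
  have hsub := hB.blocked_subset (mem_Mk.1 hP).1
  have hfree : freeCols r n P = Ioc r (r + n) \ blocked P := by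
    rw [freeCols, filter_not, filter_mem_eq_inter, inter_eq_right.2 hsub]
  have hcard := card_le_card hsub
  rw [hB.card_blocked hP, Nat.card_Ioc] at hcard
  rw [hfree, card_sdiff_of_subset hsub, hB.card_blocked hP, Nat.card_Ioc]
  omega

theorem UnderRow.cancelled_row_iff (hB : UnderRow r n B) (hPB : P ⊆ B) (y : ℕ) :
    cancelled P (r, y) ↔ y ∈ blocked P := by
  simp only [cancelled, blocked, mem_union, mem_image]
  constructor
  · rintro ⟨d, hd, ⟨h, -⟩ | ⟨-, h | h⟩⟩
    · exact absurd h (hB d (hPB hd)).1.ne'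
    · exact Or.inr ⟨d, hd, h.symm⟩
    · exact Or.inl ⟨d, hd, h.symm⟩
  · rintro (⟨d, hd, rfl⟩ | ⟨d, hd, rfl⟩)
    · exact ⟨d, hd, Or.inr ⟨(hB d (hPB hd)).1, Or.inr rfl⟩⟩
    · exact ⟨d, hd, Or.inr ⟨(hB d (hPB hd)).1, Or.inl rfl⟩⟩

theorem UnderRow.cancelled_insert_row_iff (hB : UnderRow r n B) (hPB : P ⊆ B) {x y : ℕ}
    (hy : r < y) : cancelled (insert (r, x) P) (r, y) ↔ y < x ∨ y ∈ blocked P := by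
  rw [cancelled_insert, hB.cancelled_row_iff hPB]
  simp only [lt_irrefl, false_and, or_false, true_and, hy]

theorem cancelled_insert_of_lt {c : ℕ × ℕ} (hc : r < c.1) (x : ℕ) :
    cancelled (insert (r, x) P) c ↔ cancelled P c := by
  rw [cancelled_insert]
  have : ¬ c.1 < r := by omega
  simp only [hc.ne, this, false_and, false_or]

theorem UnderRow.uncancelled_insert (hB : UnderRow r n B) (x : ℕ) :
    uncancelled B (insert (r, x) P) = uncancelled B P := by
  refine filter_congr fun c hc => ?_
  have hrc := (hB c hc).1
  rw [cancelled_insert_of_lt hrc, mem_insert]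
  simp only [Prod.ext_iff, hrc.ne', false_and, false_or]

theorem UnderRow.uncancelled_rowCells (hB : UnderRow r n B) (hPB : P ⊆ B) :
    uncancelled (rowCells r n) P = (freeCols r n P).image (r, ·) := by
  ext ⟨i, y⟩
  simp only [uncancelled, freeCols, mem_filter, mem_rowCells, mem_image, mem_Ioc, Prod.mk.injEq]
  constructor
  · rintro ⟨⟨rfl, hy⟩, -, hc⟩
    exact ⟨y, ⟨hy, fun hb => hc ((hB.cancelled_row_iff hPB y).2 hb)⟩, rfl, rfl⟩
  · rintro ⟨y, ⟨hy, hb⟩, rfl, rfl⟩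
    exact ⟨⟨rfl, hy⟩, fun h => (hB _ (hPB h)).1.ne rfl,
      fun hc => hb ((hB.cancelled_row_iff hPB y).1 hc)⟩

theorem UnderRow.uncancelled_rowCells_insert (hB : UnderRow r n B) (hPB : P ⊆ B) {x : ℕ}
    (hx : x ∈ freeCols r n P) :
    uncancelled (rowCells r n) (insert (r, x) P) = {y ∈ freeCols r n P | x < y}.image (r, ·) := by
  have hx' := (mem_Ioc.1 (mem_filter.1 hx).1).1
  ext ⟨i, y⟩
  simp only [uncancelled, freeCols, mem_filter, mem_rowCells, mem_image, mem_Ioc, mem_insert,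
    Prod.mk.injEq]
  constructor
  · rintro ⟨⟨rfl, hy⟩, hP, hc⟩
    rw [hB.cancelled_insert_row_iff hPB hy.1] at hc
    push Not at hc hP
    exact ⟨y, ⟨⟨hy, hc.2⟩, lt_of_le_of_ne hc.1 (hP.1 rfl).symm⟩, rfl, rfl⟩
  · rintro ⟨y, ⟨⟨hy, hb⟩, hxy⟩, rfl, rfl⟩
    refine ⟨⟨rfl, hy⟩, ?_, ?_⟩
    · rintro (⟨-, rfl⟩ | h)
      · exact hxy.false
      · exact (hB _ (hPB h)).1.ne rfl
    · rw [hB.cancelled_insert_row_iff hPB hy.1]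
      rintro (h | h)
      · exact (h.trans hxy).false
      · exact hb h

theorem UnderRow.card_uncancelled_union (hB : UnderRow r n B) (hPB : P ⊆ B) :
    #(uncancelled (rowCells r n ∪ B) P) = #(freeCols r n P) + #(uncancelled B P) := by
  rw [uncancelled_union, card_union_of_disjoint (disjoint_uncancelled hB.disjoint_rowCells _ _),
    hB.uncancelled_rowCells hPB,
    card_image_of_injective _ (Prod.mk_right_injective r)]

theorem UnderRow.card_uncancelled_union_insert (hB : UnderRow r n B) (hPB : P ⊆ B) {x : ℕ}
    (hx : x ∈ freeCols r n P) :
    #(uncancelled (rowCells r n ∪ B) (insert (r, x) P))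
      = #{y ∈ freeCols r n P | x < y} + #(uncancelled B P) := by
  rw [uncancelled_union, card_union_of_disjoint (disjoint_uncancelled hB.disjoint_rowCells _ _),
    hB.uncancelled_rowCells_insert hPB hx,
    hB.uncancelled_insert, card_image_of_injective _ (Prod.mk_right_injective r)]

theorem UnderRow.Mk_eq_filter (hB : UnderRow r n B) :
    Mk B k = {Q ∈ Mk (rowCells r n ∪ B) k | ¬∃ c ∈ Q, c.1 = r} := by
  ext Q
  simp only [mem_filter, mem_Mk, not_exists, not_and]
  constructor
  · rintro ⟨hQB, hcard, hna⟩
    exact ⟨⟨hQB.trans subset_union_right, hcard, hna⟩, fun c hc => (hB c (hQB hc)).1.ne'⟩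
  · rintro ⟨⟨hQB, hcard, hna⟩, hr⟩
    refine ⟨fun c hc => ?_, hcard, hna⟩
    rcases mem_union.1 (hQB hc) with h | h
    · exact absurd (mem_rowCells.1 h).1 (hr c hc)
    · exact h

theorem UnderRow.insert_mem_Mk (hB : UnderRow r n B) (hP : P ∈ Mk B k) {x : ℕ}
    (hx : x ∈ freeCols r n P) : insert (r, x) P ∈ Mk (rowCells r n ∪ B) (k + 1) := by
  obtain ⟨hPB, rfl, hna⟩ := mem_Mk.1 hP
  obtain ⟨hxI, hxb⟩ := mem_filter.1 hx
  have hxI := mem_Ioc.1 hxI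
  simp only [blocked, mem_union, mem_image, not_or, not_exists, not_and] at hxb
  refine mem_Mk.2 ⟨insert_subset (mem_union_left _ (mem_rowCells.2 ⟨rfl, hxI⟩))
    (hPB.trans subset_union_right), card_insert_of_notMem fun h => (hB _ (hPB h)).1.ne rfl,
    nonatt_insert hna fun d hd => ?_⟩
  have := hB d (hPB hd)
  exact ⟨this.1.ne, fun h => hxb.2 d hd h.symm, fun h => hxb.1 d hd h.symm, by omega⟩

theorem UnderRow.insert_row_injective (hB : UnderRow r n B) {P₁ P₂ : Finset (ℕ × ℕ)}
    (h₁ : P₁ ⊆ B) (h₂ : P₂ ⊆ B) {x₁ x₂ : ℕ} (h : insert (r, x₁) P₁ = insert (r, x₂) P₂) :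
    x₁ = x₂ ∧ P₁ = P₂ := by
  have hnot : ∀ {P : Finset (ℕ × ℕ)} {x : ℕ}, P ⊆ B → (r, x) ∉ P :=
    fun hP hx => (hB _ (hP hx)).1.ne rfl
  have hx : x₁ = x₂ := by
    have := h ▸ mem_insert_self (r, x₁) P₁
    rcases mem_insert.1 this with h' | h'
    · exact (Prod.mk.inj h').2
    · exact absurd h' (hnot h₂)
  subst hx
  exact ⟨rfl, by rw [← erase_insert (hnot h₁), h, erase_insert (hnot h₂)]⟩

theorem UnderRow.exists_insert_eq (hB : UnderRow r n B) {Q : Finset (ℕ × ℕ)}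
    (hQ : Q ∈ Mk (rowCells r n ∪ B) (k + 1)) {c : ℕ × ℕ} (hc : c ∈ Q) (hcr : c.1 = r) :
    ∃ P ∈ Mk B k, ∃ x ∈ freeCols r n P, insert (r, x) P = Q := by
  obtain ⟨hQB, hcard, hna⟩ := mem_Mk.1 hQ
  obtain ⟨r', x⟩ := c
  obtain rfl : r = r' := hcr.symm
  have hxI : x ∈ Ioc r (r + n) := by
    rcases mem_union.1 (hQB hc) with h | h
    · exact mem_Ioc.2 (mem_rowCells.1 h).2
    · exact absurd rfl (hB _ h).1.ne
  have hna' : ∀ d ∈ Q.erase (r, x), r ≠ d.1 ∧ x ≠ d.2 ∧ x ≠ d.1 ∧ d.2 ≠ r := fun d hd =>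
    hna _ hc d (mem_erase.1 hd).2 (mem_erase.1 hd).1.symm
  refine ⟨Q.erase (r, x), mem_Mk.2 ⟨fun d hd => ?_, ?_, fun d hd e he => hna d
    (mem_of_mem_erase hd) e (mem_of_mem_erase he)⟩, x, mem_filter.2 ⟨hxI, ?_⟩, insert_erase hc⟩
  · rcases mem_union.1 (hQB (mem_of_mem_erase hd)) with h | h
    · exact absurd (mem_rowCells.1 h).1.symm (hna' d hd).1
    · exact h
  · rw [card_erase_of_mem hc, hcard, Nat.add_sub_cancel]
  · simp only [blocked, mem_union, mem_image]
    rintro (⟨d, hd, rfl⟩ | ⟨d, hd, rfl⟩)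
    · exact (hna' d hd).2.2.1 rfl
    · exact (hna' d hd).2.1 rfl

theorem UnderRow.sum_Mk_pow_card_uncancelled_union (hB : UnderRow r n B) (q : ℂ) :
    ∑ P ∈ Mk B k, q ^ #(uncancelled (rowCells r n ∪ B) P) = q ^ ((n : ℤ) - 2 * k) * mq q B k := by
  rw [mq, mul_sum]
  refine sum_congr rfl fun P hP => ?_
  rw [hB.card_uncancelled_union (mem_Mk.1 hP).1, pow_add, ← hB.natCast_card_freeCols hP,
    zpow_natCast]

theorem UnderRow.sum_filter_pow_card_uncancelled_union (hB : UnderRow r n B) {q : ℂ}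
    (hq1 : q ≠ 1) :
    ∑ Q ∈ Mk (rowCells r n ∪ B) (k + 1) with ∃ c ∈ Q, c.1 = r,
        q ^ #(uncancelled (rowCells r n ∪ B) Q)
      = qInt q ((n : ℤ) - 2 * k) * mq q B k := by
  have hfree : ∀ P ∈ Mk B k, qInt q ((n : ℤ) - 2 * k) * q ^ #(uncancelled B P)
      = ∑ x ∈ freeCols r n P, q ^ #(uncancelled (rowCells r n ∪ B) (insert (r, x) P)) := by
    intro P hP
    rw [← hB.natCast_card_freeCols hP, qInt_natCast hq1, ← sum_comp_card_filter_lt, sum_mul]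
    refine sum_congr rfl fun x hx => ?_
    rw [hB.card_uncancelled_union_insert (mem_Mk.1 hP).1 hx, pow_add]
  rw [mq, mul_sum, sum_congr rfl hfree, sum_sigma']
  symm
  refine sum_bij (fun (s : (_ : Finset (ℕ × ℕ)) × ℕ) _ => insert (r, s.2) s.1)
    (fun s hs => ?_) (fun s hs t ht h => ?_) (fun Q hQ => ?_) (fun _ _ => rfl)
  · obtain ⟨hP, hx⟩ := mem_sigma.1 hs
    exact mem_filter.2 ⟨hB.insert_mem_Mk hP hx, ⟨_, mem_insert_self _ _, rfl⟩⟩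
  · obtain ⟨hx, hP⟩ := hB.insert_row_injective (mem_Mk.1 (mem_sigma.1 hs).1).1
      (mem_Mk.1 (mem_sigma.1 ht).1).1 h
    exact Sigma.ext hP (heq_of_eq hx)
  · obtain ⟨hQ, c, hc, hcr⟩ := mem_filter.1 hQ
    obtain ⟨P, hP, x, hx, rfl⟩ := hB.exists_insert_eq hQ hc hcr
    exact ⟨⟨P, x⟩, mem_sigma.2 ⟨hP, hx⟩, rfl⟩

theorem UnderRow.mq_union_zero (hB : UnderRow r n B) (q : ℂ) :
    mq q (rowCells r n ∪ B) 0 = q ^ (n : ℤ) * mq q B 0 := by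
  have hnone : ∀ Q ∈ Mk (rowCells r n ∪ B) 0, ¬∃ c ∈ Q, c.1 = r := by
    rintro Q hQ ⟨c, hc, -⟩
    rw [card_eq_zero.1 (mem_Mk.1 hQ).2.1] at hc
    exact notMem_empty c hc
  rw [mq, ← filter_true_of_mem hnone, ← hB.Mk_eq_filter,
    hB.sum_Mk_pow_card_uncancelled_union, Nat.cast_zero, mul_zero, sub_zero]

theorem UnderRow.mq_union_succ (hB : UnderRow r n B) {q : ℂ} (hq1 : q ≠ 1) :
    mq q (rowCells r n ∪ B) (k + 1)
      = q ^ ((n : ℤ) - 2 * (k + 1 : ℕ)) * mq q B (k + 1) + qInt q ((n : ℤ) - 2 * k) * mq q B k := by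
  rw [mq, ← sum_filter_not_add_sum_filter _ (fun Q => ∃ c ∈ Q, c.1 = r), ← hB.Mk_eq_filter,
    hB.sum_Mk_pow_card_uncancelled_union, hB.sum_filter_pow_card_uncancelled_union hq1]

end UnderRow

def rowBoard (n : ℕ) (p a : ℕ → ℕ) : Finset (ℕ × ℕ) :=
  (Icc 1 n).biUnion fun i => rowCells (p i) (a i)

theorem lFerrers_eq_rowBoard (N : ℕ) (l A : ℕ → ℕ) :
    lFerrers N l A = rowBoard N (fun i => Lsum l N - Lsum l (N - i + 1) + 1) A := rfl

theorem rowBoard_succ (m : ℕ) (p a : ℕ → ℕ) :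
    rowBoard (m + 1) p a
      = rowCells (p 1) (a 1) ∪ rowBoard m (fun i => p (i + 1)) (fun i => a (i + 1)) := by
  rw [rowBoard, ← insert_Icc_add_one_left_eq_Icc (by omega), biUnion_insert, rowBoard,
    ← image_add_right_Icc, image_biUnion]

theorem mq_rowBoard_eq_zero (q : ℂ) {n k : ℕ} (p a : ℕ → ℕ) (h : n < k) :
    mq q (rowBoard n p a) k = 0 := by
  refine sum_eq_zero fun P hP => absurd h (not_lt.2 ?_)
  obtain ⟨hPB, rfl, hna⟩ := mem_Mk.1 hP
  have hrows : P.image Prod.fst ⊆ (Icc 1 n).image p := by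
    simp only [subset_iff, mem_image, rowBoard, mem_biUnion, mem_rowCells] at hPB ⊢
    rintro _ ⟨c, hc, rfl⟩
    obtain ⟨i, hi, hci, -⟩ := hPB hc
    exact ⟨i, hi, hci.symm⟩
  calc #P = #(P.image Prod.fst) := (card_image_of_injOn (nonatt.injOn_fst hna)).symm
    _ ≤ #((Icc 1 n).image p) := card_le_card hrows
    _ ≤ n := card_image_le.trans (by simp)

def NestedRows (n : ℕ) (p a : ℕ → ℕ) : Prop :=
  ∀ i, 1 ≤ i → i < n → 1 ≤ a (i + 1) → p i < p (i + 1) ∧ p (i + 1) + a (i + 1) ≤ p i + a i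

section NestedRows

variable {m : ℕ} {p a : ℕ → ℕ}

theorem NestedRows.tail (h : NestedRows (m + 1) p a) :
    NestedRows m (fun i => p (i + 1)) (fun i => a (i + 1)) :=
  fun i hi him ha => h (i + 1) (by omega) (by omega) ha

theorem NestedRows.lt_and_le_first (h : NestedRows n p a) {j : ℕ} (hj : 2 ≤ j) (hjn : j ≤ n)
    (ha : 1 ≤ a j) : p 1 < p j ∧ p j + a j ≤ p 1 + a 1 := by
  induction j, hj using Nat.le_induction with
  | base => exact h 1 le_rfl hjn ha
  | succ j hj ih =>
    have := h j (by omega) hjn ha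
    have := ih (by omega) (by omega)
    omega

theorem NestedRows.underRow (h : NestedRows (m + 1) p a) :
    UnderRow (p 1) (a 1) (rowBoard m (fun i => p (i + 1)) (fun i => a (i + 1))) := by
  intro c hc
  simp only [rowBoard, mem_biUnion, mem_Icc, mem_rowCells] at hc
  obtain ⟨i, hi, hc1, hc2, hc3⟩ := hc
  have := h.lt_and_le_first (j := i + 1) (by omega) (by omega) (by omega)
  omega

theorem NestedRows.sum_mq_rowBoard_succ_mul (h : NestedRows (m + 1) p a) {q : ℂ} (hq1 : q ≠ 1)
    (F : ℕ → ℂ) :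
    ∑ k ∈ range (m + 2), mq q (rowBoard (m + 1) p a) k * F k
      = ∑ k ∈ range (m + 1), mq q (rowBoard m (fun i => p (i + 1)) (fun i => a (i + 1))) k
          * (q ^ ((a 1 : ℤ) - 2 * k) * F k + qInt q ((a 1 : ℤ) - 2 * k) * F (k + 1)) := by
  rw [rowBoard_succ]
  set B := rowBoard m (fun i => p (i + 1)) (fun i => a (i + 1))
  have hB : UnderRow (p 1) (a 1) B := h.underRow
  have hshift : ∑ k ∈ range (m + 1), mq q B k * (q ^ ((a 1 : ℤ) - 2 * k) * F k)
      = ∑ k ∈ range (m + 1), q ^ ((a 1 : ℤ) - 2 * (k + 1 : ℕ)) * mq q B (k + 1) * F (k + 1)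
        + q ^ (a 1 : ℤ) * mq q B 0 * F 0 := by
    have hlast : mq q B (m + 1) = 0 := mq_rowBoard_eq_zero q _ _ (Nat.lt_succ_self m)
    calc _ = ∑ k ∈ range (m + 2), q ^ ((a 1 : ℤ) - 2 * k) * mq q B k * F k := by
          rw [sum_range_succ _ (m + 1), hlast, mul_zero, zero_mul, add_zero]
          exact sum_congr rfl fun k _ => by ring
      _ = _ := by
          rw [sum_range_succ']
          simp only [Nat.cast_zero, mul_zero, sub_zero]
  rw [sum_range_succ', hB.mq_union_zero]
  simp only [hB.mq_union_succ hq1, mul_add, add_mul, sum_add_distrib, hshift]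
  rw [add_right_comm]
  congr 2 with k
  ring

end NestedRows

theorem prod_qInt_eq_sum_mq_rowBoard {q : ℂ} (hq : q ≠ 0) (hq1 : q ≠ 1) (n : ℕ)
    (p a : ℕ → ℕ) (h : NestedRows n p a) (z : ℤ) :
    ∏ i ∈ Icc 1 n, qInt q (z + a (n - i + 1) - 2 * i + 2)
      = ∑ k ∈ range (n + 1), mq q (rowBoard n p a) k * qFalling2 q z (n - k) := by
  induction n generalizing p a with
  | zero => simp [mq, Mk_zero, qFalling2, uncancelled, rowBoard]
  | succ m ih =>
    have hprod : ∏ i ∈ Icc 1 (m + 1), qInt q (z + a (m + 1 - i + 1) - 2 * i + 2)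
        = (∏ i ∈ Icc 1 m, qInt q (z + a (m - i + 1 + 1) - 2 * i + 2))
          * qInt q (z + a 1 - 2 * m) := by
      rw [prod_Icc_succ_top (by omega), Nat.sub_self]
      congr 1
      · exact prod_congr rfl fun i hi => by rw [Nat.sub_add_comm (mem_Icc.1 hi).2]
      · push_cast
        ring_nf
    rw [hprod, ih _ _ h.tail, h.sum_mq_rowBoard_succ_mul hq1, sum_mul]
    refine sum_congr rfl fun k hk => ?_
    have hk : k ≤ m := Nat.lt_succ_iff.1 (mem_range.1 hk)
    rw [Nat.sub_add_comm hk, qFalling2_succ, Nat.add_sub_add_right, mul_assoc]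
    have hsplit : z + a 1 - 2 * m = ((a 1 : ℤ) - 2 * k) + (z - 2 * (m - k : ℕ)) := by
      push_cast [hk]
      ring
    rw [hsplit, qInt_add hq]
    ring

theorem nestedRows_lFerrers {N : ℕ} {l A : ℕ → ℕ} (hl : ∀ i, 1 ≤ i → i ≤ N → 1 ≤ l i)
    (hgap : ∀ i, 1 ≤ i → i + 1 ≤ N → A (i + 1) ≠ 0 → l (N + 1 - i) + A (i + 1) ≤ A i) :
    NestedRows N (fun i => Lsum l N - Lsum l (N - i + 1) + 1) A := by
  intro i hi hiN hA
  have hstep := Lsum_succ l (N - i)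
  have hle := Lsum_mono l (show N - i + 1 ≤ N by omega)
  have hli := hl (N - i + 1) (by omega) (by omega)
  have hg := hgap i hi hiN (by omega)
  rw [show N + 1 - i = N - i + 1 by omega] at hg
  simp only [show N - (i + 1) + 1 = N - i by omega]
  omega

theorem lazy_matching_product_general (q : ℂ) (hq : q ≠ 0) (hq1 : q ≠ 1)
    (N : ℕ) (l A : ℕ → ℕ)
    (hl : ∀ i, 1 ≤ i → i ≤ N → 1 ≤ l i)
    (hgap : ∀ i, 1 ≤ i → i + 1 ≤ N → A (i + 1) ≠ 0 → l (N + 1 - i) + A (i + 1) ≤ A i)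
    (z : ℤ) :
    ∏ i ∈ Finset.Icc 1 N, qInt q (z + (A (N - i + 1) : ℤ) - 2 * (i : ℤ) + 2)
      = ∑ k ∈ Finset.range (N + 1),
          mq q (lFerrers N l A) k
            * ∏ j ∈ Finset.Icc 1 (N - k), qInt q (z - 2 * (j : ℤ) + 2) := by
  rw [lFerrers_eq_rowBoard]
  exact prod_qInt_eq_sum_mq_rowBoard hq hq1 N _ A (nestedRows_lFerrers hl hgap) z

/-- Product formula for matchings on l-lazy graphs (generalized Haglund–Remmel). -/
theorem lazy_matching_product (q : ℂ) (hq : q ≠ 0) (hq1 : q ≠ 1)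
    (N : ℕ) (l A : ℕ → ℕ)
    (hl : ∀ i, 1 ≤ i → i ≤ N → 1 ≤ l i)
    (hanti : ∀ i, 1 ≤ i → i + 1 ≤ N → A (i + 1) ≤ A i)
    (hle : ∀ i, 1 ≤ i → i ≤ N → A i ≤ Lsum l (N - i + 1))
    (hgap : ∀ i, 1 ≤ i → i + 1 ≤ N → A (i + 1) ≠ 0 → l (N + 1 - i) + A (i + 1) ≤ A i)
    (z : ℤ) :
    ∏ i ∈ Finset.Icc 1 N, qInt q (z + (A (N - i + 1) : ℤ) - 2 * (i : ℤ) + 2)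
      = ∑ k ∈ Finset.range (N + 1),
          mq q (lFerrers N l A) k
            * ∏ j ∈ Finset.Icc 1 (N - k), qInt q (z - 2 * (j : ℤ) + 2) :=
  lazy_matching_product_general q hq hq1 N l A hl hgap z

end EllRook
end
end
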